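/- For every type σ and every value a in Bσ, the quote function is denotationally correct: the value of the closed term ↓σ a under the canonical extension of the interpretation equals a, i.e. B̂(↓σ a) = a. -/

import Mathlib

namespace PTT


/-- Simple types over a single base type `B`. -/
inductive Ty : Type
  | base : Ty
  | arrow : Ty → Ty → Ty
deriving DecidableEq

/-- Names: the constants `⊥` and `→`, and variables (an index together with a type). -/
inductive Name : Type
  | bot : Name
  | imp : Name
  | var : ℕ → Ty → Name
deriving DecidableEq

/-- The type of a name. -/
def Name.ty : Name → Ty
  | .bot => .base
  | .imp => .arrow .base (.arrow .base .base)
  | .var _ σ => σ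

/-- Terms: names, abstraction over a variable, application. -/
inductive Tm : Type
  | name : Name → Tm
  | lam : ℕ → Ty → Tm → Tm
  | app : Tm → Tm → Tm
deriving DecidableEq

/-- The term `⊥`. -/
def botTm : Tm := .name .bot

/-- The variable `(n, σ)` as a term. -/
def vr (n : ℕ) (σ : Ty) : Tm := .name (.var n σ)

/-- Implication `s → t`. -/
def impTm (s t : Tm) : Tm := .app (.app (.name .imp) s) t

/-- `⊤ := ⊥ → ⊥`. -/
def topTm : Tm := impTm botTm botTm

/-- `¬ s := s → ⊥`. -/
def negTm (s : Tm) : Tm := impTm s botTm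

/-- `s ∨ t := (s → t) → t`. -/
def orTm (s t : Tm) : Tm := impTm (impTm s t) t

/-- `s ∧ t := ¬(¬s ∨ ¬t)`. -/
def andTm (s t : Tm) : Tm := negTm (orTm (negTm s) (negTm t))

/-- `s ≡ t := (s → t) ∧ (t → s)`. -/
def equivTm (s t : Tm) : Tm := andTm (impTm s t) (impTm t s)

/-- The typing relation. -/
inductive HasTy : Tm → Ty → Prop
  | name (x : Name) : HasTy (.name x) x.ty
  | lam {n σ s τ} : HasTy s τ → HasTy (.lam n σ s) (.arrow σ τ)
  | app {s t σ τ} : HasTy s (.arrow σ τ) → HasTy t σ → HasTy (.app s t) τ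

/-- Free variables of a term. -/
def fv : Tm → Finset (ℕ × Ty)
  | .name (.var n σ) => {(n, σ)}
  | .name _ => ∅
  | .lam n σ s => (fv s).erase (n, σ)
  | .app s t => fv s ∪ fv t

/-- A term is closed if it has no free variables. -/
def Closed (s : Tm) : Prop := fv s = ∅

/-- Capture-free parallel substitution (bound variables are renamed). -/
def substAux (ρ : ℕ × Ty → Tm) : Tm → Tm
  | .name (.var n σ) => ρ (n, σ)
  | .name x => .name x
  | .app s t => .app (substAux ρ s) (substAux ρ t)
  | .lam n σ s =>
      let used : Finset ℕ :=
        ((fv s).erase (n, σ)).biUnion (fun p => (fv (ρ p)).image Prod.fst)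
      let m : ℕ := used.sup id + 1
      .lam m σ (substAux (Function.update ρ (n, σ) (vr m σ)) s)

/-- Capture-free substitution `s[(n,σ) := t]`. -/
def subst (s : Tm) (n : ℕ) (σ : Ty) (t : Tm) : Tm :=
  substAux (Function.update (fun p => vr p.1 p.2) (n, σ) t) s

/-- Contexts: terms with exactly one hole (possibly under binders). -/
inductive Ctx : Type
  | hole : Ctx
  | lam : ℕ → Ty → Ctx → Ctx
  | appL : Ctx → Tm → Ctx
  | appR : Tm → Ctx → Ctx

/-- Filling the hole of a context with a term (capturing is allowed). -/
def Ctx.fill : Ctx → Tm → Tm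
  | .hole, s => s
  | .lam n σ C, s => .lam n σ (C.fill s)
  | .appL C t, s => .app (C.fill s) t
  | .appR t C, s => .app t (C.fill s)

/-- `C` captures the variable `p` if the hole of `C` lies below a binder for `p`. -/
def Ctx.captures : Ctx → ℕ × Ty → Prop
  | .hole, _ => False
  | .lam n σ C, p => p = (n, σ) ∨ C.captures p
  | .appL C _, p => C.captures p
  | .appR _ C, p => C.captures p

/-- `C` is admissible for `A` if it captures no variable free in `A`. -/
def Ctx.Admissible (C : Ctx) (A : Finset Tm) : Prop :=
  ∀ p ∈ A.biUnion fv, ¬ C.captures p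

/-- `s` is a subterm of `t`. -/
def Subterm (s t : Tm) : Prop := ∃ C : Ctx, C.fill s = t

/-- β-redexes. -/
def IsBetaRedex : Tm → Prop
  | .app (.lam _ _ _) _ => True
  | _ => False

/-- A term is β-normal if none of its subterms is a β-redex. -/
def BetaNormal (t : Tm) : Prop := ∀ s, Subterm s t → ¬ IsBetaRedex s

/-- Lambda equivalence: the least equivalence on well-typed terms containing
α-, β-, η-conversion and closed under arbitrary contexts. -/
inductive LamEq : Tm → Tm → Prop
  | refl {s σ} : HasTy s σ → LamEq s s
  | symm {s t} : LamEq s t → LamEq t s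
  | trans {s t u} : LamEq s t → LamEq t u → LamEq s u
  | alpha {n m σ s τ} : HasTy (.lam n σ s) τ → (m, σ) ∉ fv s →
      LamEq (.lam n σ s) (.lam m σ (subst s n σ (vr m σ)))
  | beta {n σ s t τ} : HasTy (.app (.lam n σ s) t) τ →
      LamEq (.app (.lam n σ s) t) (subst s n σ t)
  | eta {n σ s τ} : HasTy (.lam n σ (.app s (vr n σ))) τ → (n, σ) ∉ fv s →
      LamEq (.lam n σ (.app s (vr n σ))) s
  | ctx {s t σ} (C : Ctx) : LamEq s t → HasTy (C.fill s) σ → LamEq (C.fill s) (C.fill t)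

/-- The standard set-theoretic interpretation of types: `B` is interpreted as the
two truth values (`Bool`), functional types as full function spaces. -/
def Ty.sem : Ty → Type
  | .base => Bool
  | .arrow σ τ => σ.sem → τ.sem

def Ty.semDefault : (σ : Ty) → σ.sem
  | .base => false
  | .arrow _ τ => fun _ => τ.semDefault

instance (σ : Ty) : Inhabited σ.sem := ⟨σ.semDefault⟩

noncomputable instance Ty.semFintype : (σ : Ty) → Fintype σ.sem
  | .base => inferInstanceAs (Fintype Bool)
  | .arrow σ τ =>
      letI := Ty.semFintype σ
      letI := Ty.semFintype τ
      letI := Classical.decEq σ.sem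
      inferInstanceAs (Fintype (σ.sem → τ.sem))

def Ty.semCast {σ τ : Ty} (h : σ = τ) (v : σ.sem) : τ.sem := h ▸ v

/-- An interpretation assigns to every variable a value of the corresponding type
(the constants `⊥` and `→` have their values fixed). -/
def Interp : Type := ℕ → (σ : Ty) → σ.sem

def Interp.update (I : Interp) (n : ℕ) (σ : Ty) (v : σ.sem) : Interp :=
  fun m τ => if h : m = n ∧ τ = σ then Ty.semCast h.2.symm v else I m τ

/-- Type inference. -/
def typeOf : Tm → Option Ty
  | .name x => some x.ty
  | .lam _ σ s => (typeOf s).map (Ty.arrow σ)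
  | .app s t =>
      match typeOf s, typeOf t with
      | some (.arrow σ τ), some σ' => if σ = σ' then some τ else none
      | _, _ => none

/-- The canonical extension `Î` of an interpretation to all terms: `eval I s σ`
is the value of `s` at type `σ` (on well-typed terms this is the usual
denotation; junk default values are used at type mismatches). -/
def eval (I : Interp) : Tm → (σ : Ty) → σ.sem
  | .name (.var n τ), σ => if h : τ = σ then Ty.semCast h (I n τ) else default
  | .name .bot, σ =>
      match σ with
      | .base => false
      | _ => default
  | .name .imp, σ =>
      match σ with
      | .arrow .base (.arrow .base .base) => fun a b => !a || b
      | _ => default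
  | .app s t, σ =>
      match typeOf t with
      | some τ => eval I s (.arrow τ σ) (eval I t τ)
      | none => default
  | .lam n τ s, σ =>
      match σ with
      | .base => default
      | .arrow σ₁ σ₂ =>
          if h : σ₁ = τ then
            fun a => eval (I.update n τ (Ty.semCast h a)) s σ₂
          else default

/-- `I` satisfies the formula `s` if `Î s = 1`. -/
def Satisfies (I : Interp) (s : Tm) : Prop := eval I s .base = true

/-- A formula is valid if every interpretation satisfies it. -/
def ValidFml (s : Tm) : Prop := ∀ I : Interp, Satisfies I s

/-- A sequent `A ⇒ s` is valid if every interpretation satisfying `A` satisfies `s`. -/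
def ValidSeq (A : Finset Tm) (s : Tm) : Prop :=
  ∀ I : Interp, (∀ t ∈ A, Satisfies I t) → Satisfies I s

/-- Finite disjunction (the empty disjunction is `⊥`). -/
def orList : List Tm → Tm
  | [] => botTm
  | [s] => s
  | s :: l => orTm s (orList l)

/-- Finite conjunction (the empty conjunction is `⊤`). -/
def andList : List Tm → Tm
  | [] => topTm
  | [s] => s
  | s :: l => andTm s (andList l)

/-- The argument types of a type (every type has the form `σ₁…σₙB`). -/
def Ty.args : Ty → List Ty
  | .base => []
  | .arrow σ τ => σ :: τ.args

/-- Tuples of values along a list of types. -/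
def Tup : List Ty → Type
  | [] => PUnit
  | σ :: l => σ.sem × Tup l

noncomputable instance TupFintype : (l : List Ty) → Fintype (Tup l)
  | [] => inferInstanceAs (Fintype PUnit)
  | σ :: l =>
      letI := TupFintype l
      inferInstanceAs (Fintype (σ.sem × Tup l))

/-- Applying a function value to a tuple of arguments (the result type is `B`). -/
def Ty.applyTup : (σ : Ty) → σ.sem → Tup σ.args → Bool
  | .base, a, _ => a
  | .arrow _ τ, f, p => τ.applyTup (f p.1) p.2

/-- Quote/identity data for each type in a list: a quote function and the term `≐`. -/
def ArgData : List Ty → Type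
  | [] => PUnit
  | σ :: l => ((σ.sem → Tm) × Tm) × ArgData l

/-- The conjunction list `x_k ≐_{σ_k} (↓_{σ_k} b_k), …` for a tuple `b`. -/
def eqConj : (l : List Ty) → ArgData l → ℕ → Tup l → List Tm
  | [], _, _, _ => []
  | σ :: l, (d, ds), k, (b, bs) =>
      (.app (.app d.2 (vr k σ)) (d.1 b)) :: eqConj l ds (k + 1) bs

/-- `λ x_k : σ_k. …` binding one variable for each type in the list. -/
def mkLams : (l : List Ty) → ℕ → Tm → Tm
  | [], _, body => body
  | σ :: l, k, body => .lam k σ (mkLams l (k + 1) body)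

/-- The body of the quote term
`↓_{σ₁…σₙB} a := λx₁…xₙ. ⋁_{b₁…bₙ, a b₁…bₙ = 1} ⋀_j x_j ≐_{σ_j} (↓_{σ_j} b_j)`. -/
noncomputable def quoteBodyAux (σ : Ty) (ad : ArgData σ.args) (a : σ.sem) : Tm :=
  mkLams σ.args 0 (orList
    ((((Finset.univ : Finset (Tup σ.args)).toList.filter
        (fun b => σ.applyTup a b))).map
      (fun b => andList (eqConj σ.args ad 0 b))))

/-- `∀σ := λf. ⋀_{a ∈ Bσ} f (↓σ a)`, given the quote function for `σ`. -/
noncomputable def allTmAux (σ : Ty) (q : σ.sem → Tm) : Tm :=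
  .lam 0 (.arrow σ .base)
    (andList (((Finset.univ : Finset σ.sem).toList).map
      (fun a => .app (vr 0 (.arrow σ .base)) (q a))))

mutual
  /-- The quote function `↓σ` together with the identity term `≐σ`. -/
  noncomputable def quoteEq : (σ : Ty) → ((σ.sem → Tm) × Tm)
    | .base =>
        (fun a => quoteBodyAux .base PUnit.unit a,
         .lam 0 .base (.lam 1 .base (equivTm (vr 0 .base) (vr 1 .base))))
    | .arrow σ τ =>
        (fun a => quoteBodyAux (.arrow σ τ) ((quoteEq σ, argData τ) : ArgData (σ :: τ.args)) a,
         .lam 0 (.arrow σ τ) (.lam 1 (.arrow σ τ)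
           (.app (allTmAux σ (quoteEq σ).1)
             (.lam 2 σ
               (.app (.app (quoteEq τ).2
                  (.app (vr 0 (.arrow σ τ)) (vr 2 σ)))
                (.app (vr 1 (.arrow σ τ)) (vr 2 σ)))))))
  /-- Quote/identity data for all argument types of a type. -/
  noncomputable def argData : (σ : Ty) → ArgData σ.args
    | .base => PUnit.unit
    | .arrow σ τ => ((quoteEq σ, argData τ) : ArgData (σ :: τ.args))
end

/-- The quote function `↓σ : Bσ → Λ`. -/
noncomputable def quote (σ : Ty) (a : σ.sem) : Tm := (quoteEq σ).1 a

/-- The term `≐σ : σσB` denoting the identity predicate on `Bσ`. -/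
noncomputable def eqTm (σ : Ty) : Tm := (quoteEq σ).2

/-- The term `∀σ : (σB)B`. -/
noncomputable def allTm (σ : Ty) : Tm := allTmAux σ (quote σ)


/-- Propositional formulas: `s ::= x | ⊥ | s → s` with `x` a variable of type `B`. -/
inductive Propositional : Tm → Prop
  | var (n : ℕ) : Propositional (vr n .base)
  | bot : Propositional botTm
  | imp {s t} : Propositional s → Propositional t → Propositional (impTm s t)

/-- A type-respecting substitution of terms for variables. -/
def IsSubstitution (ρ : ℕ × Ty → Tm) : Prop := ∀ n σ, HasTy (ρ (n, σ)) σ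

/-- A formula is tautologous if it is a substitution instance of a tautology
(a valid propositional formula). -/
def Tautologous (s : Tm) : Prop :=
  ∃ t ρ, Propositional t ∧ ValidFml t ∧ IsSubstitution ρ ∧ s = substAux ρ t

/-- The proof system: Triv, Weak, Ded, MP, DN, Lam and Boolean replacement (BR).
Sequents consist of a finite set of formulas and a formula. -/
inductive Ded : Finset Tm → Tm → Prop
  | triv {A s} : (∀ t ∈ A, HasTy t .base) → HasTy s .base → Ded (insert s A) s
  | weak {A s t} : HasTy s .base → Ded A t → Ded (insert s A) t
  | ded {A s t} : Ded (insert s A) t → Ded A (impTm s t)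
  | mp {A s t} : Ded A (impTm s t) → Ded A s → Ded A t
  | dn {A s} : Ded A (negTm (negTm s)) → Ded A s
  | lam {A s t} : Ded A s → LamEq s t → HasTy t .base → Ded A t
  | br {A s t} (C : Ctx) : C.Admissible A → Ded A (equivTm s t) →
      Ded A (C.fill s) → HasTy (C.fill t) .base → Ded A (C.fill t)

/-!
Both `↓σ` and `≐σ` are shown correct by one structural induction on `σ`: `≐σ` must denote
equality on `Bσ` and every `↓σ a` must denote `a`. For `σ = σ₁…σₙB`, the body of `↓σ a`
evaluated at arguments `b'` is the disjunction, over the tuples `b` with `a b = 1`, of the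
conjunctions `⋀ⱼ b'ⱼ ≐ ↓bⱼ`, and by induction such a conjunction holds exactly when `b' = b`;
so the body evaluates to `a b'`. For `≐_{στ}` one needs `∀σ f` to hold iff `f` holds on all
of `Bσ`; this is where correctness of `↓σ` enters, as `∀σ f = ⋀ₐ f (↓σ a)`.
-/

lemma Interp.update_same (I : Interp) (n : ℕ) (σ : Ty) (v : σ.sem) :
    I.update n σ v n σ = v := by
  simp [Interp.update, Ty.semCast]

lemma Interp.update_of_ne (I : Interp) {n m : ℕ} {σ : Ty} (τ : Ty) (v : σ.sem) (h : m ≠ n) :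
    I.update n σ v m τ = I m τ := by
  simp [Interp.update, h]

lemma HasTy.typeOf_eq {s : Tm} {σ : Ty} (h : HasTy s σ) : typeOf s = some σ := by
  induction h with
  | name x => rfl
  | lam _ ih => simp [typeOf, ih]
  | app _ _ ihs iht => simp [typeOf, ihs, iht]

lemma hasTy_vr (n : ℕ) (σ : Ty) : HasTy (vr n σ) σ := .name (.var n σ)

lemma hasTy_botTm : HasTy botTm .base := .name .bot

lemma hasTy_impTm {s t : Tm} (hs : HasTy s .base) (ht : HasTy t .base) :
    HasTy (impTm s t) .base :=
  .app (.app (.name .imp) hs) ht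

lemma hasTy_negTm {s : Tm} (hs : HasTy s .base) : HasTy (negTm s) .base :=
  hasTy_impTm hs hasTy_botTm

lemma hasTy_orTm {s t : Tm} (hs : HasTy s .base) (ht : HasTy t .base) :
    HasTy (orTm s t) .base :=
  hasTy_impTm (hasTy_impTm hs ht) ht

lemma hasTy_andTm {s t : Tm} (hs : HasTy s .base) (ht : HasTy t .base) :
    HasTy (andTm s t) .base :=
  hasTy_negTm (hasTy_orTm (hasTy_negTm hs) (hasTy_negTm ht))

lemma hasTy_equivTm {s t : Tm} (hs : HasTy s .base) (ht : HasTy t .base) :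
    HasTy (equivTm s t) .base :=
  hasTy_andTm (hasTy_impTm hs ht) (hasTy_impTm ht hs)

lemma hasTy_orList : ∀ {l : List Tm}, (∀ s ∈ l, HasTy s .base) → HasTy (orList l) .base
  | [], _ => hasTy_botTm
  | [s], h => h s (by simp)
  | s :: t :: l, h =>
      hasTy_orTm (h s (by simp)) (hasTy_orList fun u hu => h u (List.mem_cons_of_mem s hu))

lemma hasTy_andList : ∀ {l : List Tm}, (∀ s ∈ l, HasTy s .base) → HasTy (andList l) .base
  | [], _ => hasTy_impTm hasTy_botTm hasTy_botTm
  | [s], h => h s (by simp)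
  | s :: t :: l, h =>
      hasTy_andTm (h s (by simp)) (hasTy_andList fun u hu => h u (List.mem_cons_of_mem s hu))

lemma hasTy_mkLams (σ : Ty) (k : ℕ) {body : Tm} (h : HasTy body .base) :
    HasTy (mkLams σ.args k body) σ := by
  induction σ generalizing k with
  | base => exact h
  | arrow σ τ _ ihτ => exact .lam (ihτ (k + 1))

section Evaluation

variable (I : Interp)

lemma eval_vr (n : ℕ) (σ : Ty) : eval I (vr n σ) σ = I n σ := by
  show (if h : σ = σ then Ty.semCast h (I n σ) else default) = _
  rw [dif_pos rfl]
  rfl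

lemma eval_app {s t : Tm} {τ : Ty} (σ : Ty) (ht : HasTy t τ) :
    eval I (.app s t) σ = eval I s (.arrow τ σ) (eval I t τ) := by
  show (match typeOf t with
    | some τ => eval I s (.arrow τ σ) (eval I t τ)
    | none => default) = _
  rw [ht.typeOf_eq]

lemma eval_lam (n : ℕ) (τ σ : Ty) (s : Tm) :
    eval I (.lam n τ s) (.arrow τ σ) = fun a => eval (I.update n τ a) s σ := by
  show (if h : τ = τ then fun a => eval (I.update n τ (Ty.semCast h a)) s σ else default) = _
  rw [dif_pos rfl]
  rfl

variable {s t : Tm} (hs : HasTy s .base) (ht : HasTy t .base)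
include hs ht

lemma eval_impTm : eval I (impTm s t) .base = (!eval I s .base || eval I t .base) := by
  rw [impTm, eval_app I _ ht, eval_app I _ hs]
  rfl

lemma eval_orTm : eval I (orTm s t) .base = (eval I s .base || eval I t .base) := by
  rw [orTm, eval_impTm I (hasTy_impTm hs ht) ht, eval_impTm I hs ht]
  cases eval I s .base <;> cases eval I t .base <;> rfl

lemma eval_andTm : eval I (andTm s t) .base = (eval I s .base && eval I t .base) := by
  have hneg : ∀ {u}, HasTy u .base → eval I (negTm u) .base = !eval I u .base := fun hu => by
    rw [negTm, eval_impTm I hu hasTy_botTm]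
    exact Bool.or_false _
  rw [andTm, hneg (hasTy_orTm (hasTy_negTm hs) (hasTy_negTm ht)),
    eval_orTm I (hasTy_negTm hs) (hasTy_negTm ht), hneg hs, hneg ht]
  cases eval I s .base <;> cases eval I t .base <;> rfl

lemma eval_equivTm : eval I (equivTm s t) .base = true ↔ eval I s .base = eval I t .base := by
  rw [equivTm, eval_andTm I (hasTy_impTm hs ht) (hasTy_impTm ht hs),
    eval_impTm I hs ht, eval_impTm I ht hs]
  cases eval I s .base <;> cases eval I t .base <;> simp only [Ty.sem] <;> decide

lemma satisfies_orTm_iff : Satisfies I (orTm s t) ↔ Satisfies I s ∨ Satisfies I t := by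
  unfold Satisfies
  rw [eval_orTm I hs ht]
  exact Bool.or_eq_true_iff

lemma satisfies_andTm_iff : Satisfies I (andTm s t) ↔ Satisfies I s ∧ Satisfies I t := by
  unfold Satisfies
  rw [eval_andTm I hs ht]
  exact Bool.and_eq_true_iff

omit hs ht

lemma satisfies_orList_iff : ∀ {l : List Tm}, (∀ s ∈ l, HasTy s .base) →
    (Satisfies I (orList l) ↔ ∃ s ∈ l, Satisfies I s)
  | [], _ => iff_of_false Bool.false_ne_true (by simp)
  | [s], _ => by simp only [List.mem_singleton, exists_eq_left]; rfl
  | s :: t :: l, h => by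
      have hl : ∀ u ∈ t :: l, HasTy u .base := fun u hu => h u (List.mem_cons_of_mem s hu)
      change Satisfies I (orTm s (orList (t :: l))) ↔ _
      rw [satisfies_orTm_iff I (h s (by simp)) (hasTy_orList hl), satisfies_orList_iff hl]
      simp

lemma satisfies_andList_iff : ∀ {l : List Tm}, (∀ s ∈ l, HasTy s .base) →
    (Satisfies I (andList l) ↔ ∀ s ∈ l, Satisfies I s)
  | [], _ => iff_of_true rfl (by simp)
  | [s], _ => by simp only [List.mem_singleton, forall_eq]; rfl
  | s :: t :: l, h => by
      have hl : ∀ u ∈ t :: l, HasTy u .base := fun u hu => h u (List.mem_cons_of_mem s hu)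
      change Satisfies I (andTm s (andList (t :: l))) ↔ _
      rw [satisfies_andTm_iff I (h s (by simp)) (hasTy_andList hl), satisfies_andList_iff hl]
      exact List.forall_mem_cons.symm

end Evaluation

def Interp.updateTup : Interp → ℕ → (l : List Ty) → Tup l → Interp
  | I, _, [], _ => I
  | I, k, σ :: l, b => (I.update k σ b.1).updateTup (k + 1) l b.2

lemma Interp.updateTup_of_lt (I : Interp) (l : List Ty) (k : ℕ) (b : Tup l) {m : ℕ} (τ : Ty)
    (h : m < k) : I.updateTup k l b m τ = I m τ := by
  induction l generalizing I k with
  | nil => rfl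
  | cons σ l ih =>
      rw [Interp.updateTup, ih _ _ _ (by omega), Interp.update_of_ne _ _ _ (by omega)]

lemma Ty.applyTup_eval_mkLams (σ : Ty) (I : Interp) (k : ℕ) (body : Tm) (b : Tup σ.args) :
    σ.applyTup (eval I (mkLams σ.args k body) σ) b = eval (I.updateTup k σ.args b) body .base := by
  induction σ generalizing I k with
  | base => rfl
  | arrow σ τ _ ihτ =>
      change τ.applyTup (eval I (.lam k σ (mkLams τ.args (k + 1) body)) (.arrow σ τ) b.1) b.2 = _
      rw [eval_lam]
      exact ihτ _ _ b.2

lemma Ty.applyTup_ext : ∀ {σ : Ty} {f g : σ.sem}, (∀ b, σ.applyTup f b = σ.applyTup g b) → f = g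
  | .base, _, _, h => h PUnit.unit
  | .arrow _ _, _, _, h => funext fun x => applyTup_ext fun b => h (x, b)

structure QuoteSpec (σ : Ty) (d : (σ.sem → Tm) × Tm) : Prop where
  hasTy_quote : ∀ a, HasTy (d.1 a) σ
  hasTy_eq : HasTy d.2 (.arrow σ (.arrow σ .base))
  eval_quote : ∀ I a, eval I (d.1 a) σ = a
  eval_eq : ∀ I x y, eval I d.2 (.arrow σ (.arrow σ .base)) x y = true ↔ x = y

def ArgData.Spec : (l : List Ty) → ArgData l → Prop
  | [], _ => True
  | σ :: l, (d, ds) => QuoteSpec σ d ∧ ArgData.Spec l ds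

lemma QuoteSpec.eval_eq_app {σ : Ty} {d : (σ.sem → Tm) × Tm} (hd : QuoteSpec σ d) (I : Interp)
    {s t : Tm} (hs : HasTy s σ) (ht : HasTy t σ) :
    Satisfies I (.app (.app d.2 s) t) ↔ eval I s σ = eval I t σ := by
  rw [Satisfies, eval_app I _ ht, eval_app I _ hs, hd.eval_eq]

section EqConj

variable {l : List Ty} {ds : ArgData l} (hds : ArgData.Spec l ds)
include hds

lemma hasTy_of_mem_eqConj {k : ℕ} {b : Tup l} : ∀ s ∈ eqConj l ds k b, HasTy s .base := by
  induction l generalizing k with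
  | nil => simp [eqConj]
  | cons σ l ih =>
      obtain ⟨hd, hds⟩ := hds
      rintro s (_ | ⟨_, hs⟩)
      · exact .app (.app hd.hasTy_eq (hasTy_vr k σ)) (hd.hasTy_quote b.1)
      · exact ih hds s hs

lemma forall_satisfies_eqConj_iff (I : Interp) (k : ℕ) (b b' : Tup l) :
    (∀ s ∈ eqConj l ds k b, Satisfies (I.updateTup k l b') s) ↔ b' = b := by
  induction l generalizing I k with
  | nil => exact iff_of_true (by simp [eqConj]) rfl
  | cons σ l ih =>
      rcases ds with ⟨d, ds⟩
      obtain ⟨hd, hds⟩ := hds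
      change (∀ s ∈ .app (.app d.2 (vr k σ)) (d.1 b.1) :: eqConj l ds (k + 1) b.2,
        Satisfies ((I.update k σ b'.1).updateTup (k + 1) l b'.2) s) ↔ _
      rw [List.forall_mem_cons, hd.eval_eq_app _ (hasTy_vr k σ) (hd.hasTy_quote b.1), eval_vr,
        hd.eval_quote, Interp.updateTup_of_lt _ _ _ _ _ (Nat.lt_succ_self k),
        Interp.update_same, ih hds]
      exact Prod.ext_iff.symm

end EqConj

lemma hasTy_quoteBodyAux {σ : Ty} {ad : ArgData σ.args} (had : ArgData.Spec σ.args ad)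
    (a : σ.sem) : HasTy (quoteBodyAux σ ad a) σ :=
  hasTy_mkLams σ 0 <| hasTy_orList <| List.forall_mem_map.2 fun _ _ =>
    hasTy_andList (hasTy_of_mem_eqConj had)

lemma eval_quoteBodyAux {σ : Ty} {ad : ArgData σ.args} (had : ArgData.Spec σ.args ad)
    (I : Interp) (a : σ.sem) : eval I (quoteBodyAux σ ad a) σ = a := by
  refine Ty.applyTup_ext fun b' => ?_
  have hconj : ∀ b, Satisfies (I.updateTup 0 σ.args b') (andList (eqConj σ.args ad 0 b)) ↔
      b' = b := fun b =>
    (satisfies_andList_iff _ (hasTy_of_mem_eqConj had)).trans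
      (forall_satisfies_eqConj_iff had _ _ _ _)
  rw [quoteBodyAux, Ty.applyTup_eval_mkLams]
  refine Bool.eq_iff_iff.2 ?_
  change Satisfies _ _ ↔ _
  rw [satisfies_orList_iff _ (List.forall_mem_map.2 fun _ _ =>
    hasTy_andList (hasTy_of_mem_eqConj had))]
  simp [hconj]

lemma hasTy_allTmAux {σ : Ty} {q : σ.sem → Tm} (hq : ∀ a, HasTy (q a) σ) :
    HasTy (allTmAux σ q) (.arrow (.arrow σ .base) .base) :=
  .lam <| hasTy_andList <| List.forall_mem_map.2 fun a _ => .app (hasTy_vr 0 _) (hq a)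

lemma QuoteSpec.eval_allTmAux_iff {σ : Ty} {d : (σ.sem → Tm) × Tm} (hd : QuoteSpec σ d)
    (I : Interp) (G : (Ty.arrow σ .base).sem) :
    eval I (allTmAux σ d.1) (.arrow (.arrow σ .base) .base) G = true ↔ ∀ a, G a = true := by
  rw [allTmAux, eval_lam]
  change Satisfies _ _ ↔ _
  rw [satisfies_andList_iff _ (List.forall_mem_map.2 fun a _ =>
    .app (hasTy_vr 0 _) (hd.hasTy_quote a))]
  simp only [List.forall_mem_map, Finset.mem_toList, Finset.mem_univ, true_implies]
  refine forall_congr' fun a => ?_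
  rw [Satisfies, eval_app _ _ (hd.hasTy_quote a), eval_vr, Interp.update_same, hd.eval_quote]

lemma quoteSpec_base : QuoteSpec .base (quoteEq .base) where
  hasTy_quote := hasTy_quoteBodyAux trivial
  hasTy_eq := .lam (.lam (hasTy_equivTm (hasTy_vr 0 _) (hasTy_vr 1 _)))
  eval_quote := eval_quoteBodyAux trivial
  eval_eq I x y := by
    change eval I (.lam 0 .base (.lam 1 .base (equivTm (vr 0 .base) (vr 1 .base))))
      (.arrow .base (.arrow .base .base)) x y = true ↔ _
    simp only [eval_lam]
    rw [eval_equivTm _ (hasTy_vr 0 _) (hasTy_vr 1 _), eval_vr, eval_vr]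
    simp [Interp.update_same, Interp.update_of_ne]

lemma hasTy_eqTm_arrow {σ τ : Ty} (hσ : ∀ a, HasTy (quote σ a) σ)
    (hτ : HasTy (eqTm τ) (.arrow τ (.arrow τ .base))) :
    HasTy (eqTm (.arrow σ τ)) (.arrow (.arrow σ τ) (.arrow (.arrow σ τ) .base)) :=
  .lam <| .lam <| .app (hasTy_allTmAux hσ) <| .lam <|
    .app (.app hτ (.app (hasTy_vr 0 _) (hasTy_vr 2 σ))) (.app (hasTy_vr 1 _) (hasTy_vr 2 σ))

lemma eval_eqTm_arrow_iff {σ τ : Ty} (hσ : QuoteSpec σ (quoteEq σ))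
    (hτ : QuoteSpec τ (quoteEq τ)) (I : Interp) (f g : (Ty.arrow σ τ).sem) :
    eval I (eqTm (.arrow σ τ)) (.arrow (.arrow σ τ) (.arrow (.arrow σ τ) .base)) f g = true
      ↔ f = g := by
  have hf : HasTy (.app (vr 0 (.arrow σ τ)) (vr 2 σ)) τ := .app (hasTy_vr 0 _) (hasTy_vr 2 σ)
  have hg : HasTy (.app (vr 1 (.arrow σ τ)) (vr 2 σ)) τ := .app (hasTy_vr 1 _) (hasTy_vr 2 σ)
  have hpointwise : ∀ x, Satisfies
      (((I.update 0 (.arrow σ τ) f).update 1 (.arrow σ τ) g).update 2 σ x)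
      (.app (.app (quoteEq τ).2 (.app (vr 0 _) (vr 2 σ))) (.app (vr 1 _) (vr 2 σ))) ↔
        f x = g x := fun x => by
    rw [hτ.eval_eq_app _ hf hg, eval_app _ _ (hasTy_vr 2 σ), eval_app _ _ (hasTy_vr 2 σ)]
    simp only [eval_vr, Interp.update_same]
    rw [Interp.update_of_ne _ _ _ (by decide : 0 ≠ 2),
      Interp.update_of_ne _ _ _ (by decide : 0 ≠ 1), Interp.update_of_ne _ _ _ (by decide : 1 ≠ 2),
      Interp.update_same, Interp.update_same]
  change eval I (.lam 0 (.arrow σ τ) (.lam 1 (.arrow σ τ) (.app (allTmAux σ (quoteEq σ).1)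
    (.lam 2 σ (.app (.app (quoteEq τ).2 (.app (vr 0 _) (vr 2 σ))) (.app (vr 1 _) (vr 2 σ)))))))
    (.arrow (.arrow σ τ) (.arrow (.arrow σ τ) .base)) f g = true ↔ _
  simp only [eval_lam]
  rw [eval_app _ _ (.lam (.app (.app hτ.hasTy_eq hf) hg)), hσ.eval_allTmAux_iff]
  refine Iff.trans (forall_congr' fun x => ?_) funext_iff.symm
  rw [eval_lam]
  exact hpointwise x

lemma quoteEq_spec (σ : Ty) : QuoteSpec σ (quoteEq σ) ∧ ArgData.Spec σ.args (argData σ) := by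
  induction σ with
  | base => exact ⟨quoteSpec_base, trivial⟩
  | arrow σ τ ihσ ihτ =>
      have had : ArgData.Spec (Ty.arrow σ τ).args (argData (.arrow σ τ)) := ⟨ihσ.1, ihτ.2⟩
      exact ⟨⟨hasTy_quoteBodyAux had, hasTy_eqTm_arrow ihσ.1.hasTy_quote ihτ.1.hasTy_eq,
        eval_quoteBodyAux had, eval_eqTm_arrow_iff ihσ.1 ihτ.1⟩, had⟩

/-- `B̂(↓σ a) = a` (for every interpretation, since `↓σ a` is closed). -/
theorem quote_denotes (σ : Ty) (a : σ.sem) (I : Interp) :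
    eval I (quote σ a) σ = a :=
  (quoteEq_spec σ).1.eval_quote I a

end PTT
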